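/- For every integer length bound k ≥ 3, every non-uniform length function λ, and every real ε > 0, there exists a truthful (k,λ)-BE mechanism that admits approximation ratio max{ k − 1 + ε, ρ(λ) }. -/

import Mathlib

/-!
Barter exchange (BE) framework, following Emek–Shpiro,
"Barter Exchange with Bounded Trading Cycles".
-/

open Finset

namespace BarterExchange

noncomputable section

/-- The length of the trading cycle of `π` containing agent `i`
(equals `0` when `i` does not partake in `π`). -/
def cycLen {n : ℕ} (π : Equiv.Perm (Fin n)) (i : Fin n) : ℕ :=
  (π.cycleOf i).support.card

/-- The utility of agent `i` from the exchange `π` under the length function `lam`: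
`lam ℓ` if `i` partakes in a trading cycle of length `ℓ`, and `0` otherwise. -/
def utility {n : ℕ} (lam : ℕ → ℝ) (π : Equiv.Perm (Fin n)) (i : Fin n) : ℝ :=
  if π i ≠ i then lam (cycLen π i) else 0

/-- Social welfare of an exchange: the sum of the agents' utilities,
which equals `∑_{trading cycles c} len(c)·λ(len(c))`. -/
def SW {n : ℕ} (lam : ℕ → ℝ) (π : Equiv.Perm (Fin n)) : ℝ :=
  ∑ i, utility lam π i

/-- A wish list vector: `W i ⊆ [n] ∖ {i}`. -/
def IsWishList {n : ℕ} (W : Fin n → Finset (Fin n)) : Prop :=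
  ∀ i, i ∉ W i

/-- `π ∈ Π_W^k`: every partaking agent is sent to an agent on her wish list and
all trading cycles have length at most `k`. -/
def Feasible (k : ℕ) {n : ℕ} (W : Fin n → Finset (Fin n)) (π : Equiv.Perm (Fin n)) : Prop :=
  ∀ i : Fin n, π i ≠ i → π i ∈ W i ∧ cycLen π i ≤ k

/-- A length function for length bound `k`: a non-increasing map `{2,…,k} → (0,1]`. -/
def IsLengthFunction (k : ℕ) (lam : ℕ → ℝ) : Prop :=
  (∀ ℓ : ℕ, 2 ≤ ℓ → ℓ ≤ k → 0 < lam ℓ ∧ lam ℓ ≤ 1) ∧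
    ∀ ℓ ℓ' : ℕ, 2 ≤ ℓ → ℓ ≤ ℓ' → ℓ' ≤ k → lam ℓ' ≤ lam ℓ

/-- A mechanism assigns an exchange to every number of agents and wish list vector. -/
abbrev Mechanism : Type :=
  (n : ℕ) → (Fin n → Finset (Fin n)) → Equiv.Perm (Fin n)

/-- A `(k,λ)`-BE mechanism outputs, on every wish list vector `W`,
an exchange in `Π_W^k` (individual rationality). -/
def IsMechanism (k : ℕ) (f : Mechanism) : Prop :=
  ∀ (n : ℕ) (W : Fin n → Finset (Fin n)), IsWishList W → Feasible k W (f n W)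

/-- Truthfulness: under the subset wish list assumption, no agent can gain by
reporting a strict subset of her true wish list. -/
def Truthful (k : ℕ) (lam : ℕ → ℝ) (f : Mechanism) : Prop :=
  ∀ (n : ℕ) (Wstar W : Fin n → Finset (Fin n)), IsWishList Wstar →
    (∀ j, W j ⊆ Wstar j) → ∀ i : Fin n,
      utility lam (f n W) i ≤ utility lam (f n (Function.update W i (Wstar i))) i

/-- `f` admits approximation ratio `r ≥ 1`: on every wish list vector the social welfare of
`f`'s outcome is at least `1/r` times that of any feasible exchange. -/
def ApproxRatio (k : ℕ) (lam : ℕ → ℝ) (f : Mechanism) (r : ℝ) : Prop :=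
  1 ≤ r ∧
    ∀ (n : ℕ) (Wstar : Fin n → Finset (Fin n)), IsWishList Wstar →
      ∀ π : Equiv.Perm (Fin n), Feasible k Wstar π →
        SW lam (f n Wstar) ≥ (1 / r) * SW lam π

/-- A length function is non-uniform if it strictly decreases somewhere on `{2,…,k}`. -/
def NonUniform (k : ℕ) (lam : ℕ → ℝ) : Prop :=
  ∃ ℓ ℓ' : ℕ, 2 ≤ ℓ ∧ ℓ < ℓ' ∧ ℓ' ≤ k ∧ lam ℓ' < lam ℓ

/-- The critical ratio `ρ(λ)`: the maximum, over all pairs `2 ≤ ℓ < ℓ′ ≤ k` with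
`λ(ℓ) > λ(ℓ′)`, of `max{ ℓ′·λ(ℓ′)/λ(ℓ), ((ℓ−1)/ℓ)·(ℓ′·λ(ℓ′)/λ(ℓ)) + 1 }`. -/
def rho (k : ℕ) (lam : ℕ → ℝ) : ℝ :=
  sSup {x : ℝ |
    ∃ ℓ ℓ' : ℕ, 2 ≤ ℓ ∧ ℓ < ℓ' ∧ ℓ' ≤ k ∧ lam ℓ' < lam ℓ ∧
      x = max ((ℓ' : ℝ) * lam ℓ' / lam ℓ)
              (((ℓ : ℝ) - 1) / (ℓ : ℝ) * ((ℓ' : ℝ) * lam ℓ' / lam ℓ) + 1)}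

/-!
The mechanism runs one phase for each value `v` of `λ`, from the largest to the smallest: among
the agents still unmatched it picks an exchange of maximum size all of whose cycles have value
`v`, breaking ties by a fixed order that ignores the wish lists.

Truthfulness: when agent `i` enlarges her wish list, nothing changes until the first phase whose
choice relies on one of her new wishes; that choice serves her at the current value, which is
the best any remaining phase could offer.

Approximation: charge each cycle of an optimal exchange to the first phase that has its value or
breaks it up. All cycles charged to a phase meet the `N` agents it matches (a disjoint cycle of
its value would enlarge the choice), and those of its own value together have at most `N`
agents. Under these two counting constraints the charged welfare is at most `ρ(λ)` times that
of the phase, and `ρ(λ) ≥ 1` for non-uniform `λ`.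
-/

open Equiv Equiv.Perm

variable {n : ℕ} {lam : ℕ → ℝ} {k : ℕ}

lemma cycLen_mul_of_apply_eq {σ τ : Perm (Fin n)} (h : σ.Disjoint τ) {x : Fin n} (hx : τ x = x) :
    cycLen (σ * τ) x = cycLen σ x := by
  rw [cycLen, cycLen, h.cycleOf_mul_distrib, (cycleOf_eq_one_iff τ).2 hx, mul_one]

lemma utility_of_apply_eq {σ : Perm (Fin n)} {x : Fin n} (hx : σ x = x) :
    utility lam σ x = 0 := by
  simp [utility, hx]

lemma utility_mul_of_apply_eq {σ τ : Perm (Fin n)} (h : σ.Disjoint τ) {x : Fin n}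
    (hx : τ x = x) : utility lam (σ * τ) x = utility lam σ x := by
  simp only [utility, mul_apply, hx, cycLen_mul_of_apply_eq h hx]

lemma utility_mul {σ τ : Perm (Fin n)} (h : σ.Disjoint τ) (x : Fin n) :
    utility lam (σ * τ) x = utility lam σ x + utility lam τ x := by
  rcases h x with hσ | hτ
  · rw [h.commute.eq, utility_mul_of_apply_eq h.symm hσ, utility_of_apply_eq hσ, zero_add]
  · rw [utility_mul_of_apply_eq h hτ, utility_of_apply_eq hτ, add_zero]

lemma SW_mul {σ τ : Perm (Fin n)} (h : σ.Disjoint τ) :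
    SW lam (σ * τ) = SW lam σ + SW lam τ := by
  simp only [SW, utility_mul h, sum_add_distrib]

lemma SW_eq_sum_support (σ : Perm (Fin n)) :
    SW lam σ = ∑ x ∈ σ.support, lam (cycLen σ x) := by
  simp only [SW, utility, support, sum_filter]

lemma cycLen_of_isCycle {c : Perm (Fin n)} (hc : c.IsCycle) {x : Fin n} (hx : c x ≠ x) :
    cycLen c x = #c.support := by
  rw [cycLen, hc.cycleOf_eq hx]

lemma SW_of_isCycle {c : Perm (Fin n)} (hc : c.IsCycle) :
    SW lam c = #c.support * lam #c.support := by
  rw [SW_eq_sum_support, sum_congr rfl fun x hx => by rw [cycLen_of_isCycle hc (mem_support.1 hx)],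
    sum_const, nsmul_eq_mul]

lemma Feasible.mul {W : Fin n → Finset (Fin n)} {σ τ : Perm (Fin n)} (hσ : Feasible k W σ)
    (hτ : Feasible k W τ) (h : σ.Disjoint τ) : Feasible k W (σ * τ) := by
  intro x hx
  rcases h x with hσx | hτx
  · rw [h.commute.eq, mul_apply, hσx] at hx ⊢
    rw [cycLen_mul_of_apply_eq h.symm hσx]
    exact hτ x hx
  · rw [mul_apply, hτx] at hx ⊢
    rw [cycLen_mul_of_apply_eq h hτx]
    exact hσ x hx

def cyclesWelfare (lam : ℕ → ℝ) (D : Finset (Perm (Fin n))) : ℝ :=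
  ∑ c ∈ D, (#c.support : ℝ) * lam #c.support

lemma SW_eq_cyclesWelfare (π : Perm (Fin n)) :
    SW lam π = cyclesWelfare lam π.cycleFactorsFinset := by
  induction π using cycle_induction_on with
  | base_one => simp [SW, utility, cyclesWelfare]
  | base_cycles c hc =>
    rw [hc.cycleFactorsFinset_eq_singleton, cyclesWelfare, sum_singleton, SW_of_isCycle hc]
  | induction_disjoint σ τ hd _ hσ hτ =>
    rw [SW_mul hd, hd.cycleFactorsFinset_mul_eq_union, cyclesWelfare,
      sum_union hd.disjoint_cycleFactorsFinset, hσ, hτ, cyclesWelfare, cyclesWelfare]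

lemma cycLen_eq_of_mem_cycleFactorsFinset {π c : Perm (Fin n)} (hc : c ∈ π.cycleFactorsFinset)
    {x : Fin n} (hx : c x ≠ x) : cycLen π x = #c.support := by
  rw [cycLen, ← cycle_is_cycleOf (mem_support.2 hx) hc]

lemma Feasible.of_mem_cycleFactorsFinset {W : Fin n → Finset (Fin n)} {π c : Perm (Fin n)}
    (hπ : Feasible k W π) (hc : c ∈ π.cycleFactorsFinset) : Feasible k W c := by
  obtain ⟨hcyc, hagree⟩ := mem_cycleFactorsFinset_iff.1 hc
  intro x hx
  have hπx := hagree x (mem_support.2 hx)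
  rw [hπx, cycLen_of_isCycle hcyc hx, ← cycLen_eq_of_mem_cycleFactorsFinset hc hx]
  exact hπ x (hπx ▸ hx)

lemma card_support_le_of_mem_cycleFactorsFinset {W : Fin n → Finset (Fin n)} {π c : Perm (Fin n)}
    (hπ : Feasible k W π) (hc : c ∈ π.cycleFactorsFinset) : #c.support ≤ k := by
  obtain ⟨x, hx⟩ := (mem_cycleFactorsFinset_iff.1 hc).1.nonempty_support
  rw [← cycLen_of_isCycle (mem_cycleFactorsFinset_iff.1 hc).1 (mem_support.1 hx)]
  exact ((hπ.of_mem_cycleFactorsFinset hc) x (mem_support.1 hx)).2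

lemma le_rho {ℓ ℓ' : ℕ} (h2 : 2 ≤ ℓ) (hlt : ℓ < ℓ') (hk : ℓ' ≤ k) (hlt' : lam ℓ' < lam ℓ) :
    max ((ℓ' : ℝ) * lam ℓ' / lam ℓ) (((ℓ : ℝ) - 1) / ℓ * ((ℓ' : ℝ) * lam ℓ' / lam ℓ) + 1) ≤
      rho k lam := by
  refine le_csSup ?_ ⟨ℓ, ℓ', h2, hlt, hk, hlt', rfl⟩
  let f : Fin (k + 1) × Fin (k + 1) → ℝ := fun p =>
    max ((p.2 : ℝ) * lam p.2 / lam p.1)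
      (((p.1 : ℝ) - 1) / p.1 * ((p.2 : ℝ) * lam p.2 / lam p.1) + 1)
  refine ((Set.finite_range f).subset ?_).bddAbove
  rintro x ⟨a, b, -, hab, hb, -, rfl⟩
  exact ⟨(⟨a, by omega⟩, ⟨b, by omega⟩), rfl⟩

lemma one_le_rho (hlam : IsLengthFunction k lam) (hnu : NonUniform k lam) : 1 ≤ rho k lam := by
  obtain ⟨ℓ, ℓ', h2, hlt, hk, hlt'⟩ := hnu
  have hℓ : (2 : ℝ) ≤ ℓ := by exact_mod_cast h2
  have hpos : 0 < lam ℓ := (hlam.1 ℓ h2 (by omega)).1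
  have hpos' : 0 < lam ℓ' := (hlam.1 ℓ' (by omega) hk).1
  have : 0 ≤ ((ℓ : ℝ) - 1) / ℓ * ((ℓ' : ℝ) * lam ℓ' / lam ℓ) :=
    mul_nonneg (div_nonneg (by linarith) (by linarith)) (by positivity)
  exact le_trans (by linarith) ((le_max_right _ _).trans (le_rho h2 hlt hk hlt'))

lemma add_sub_mul_le_mul {S N a g u r : ℝ} (hS : 0 ≤ S) (hSN : S ≤ N) (hSa : S ≤ g * a)
    (ha : 0 ≤ a) (hg : 0 < g) (hu : 0 ≤ u) (hur : u ≤ r) (hur' : (g - 1) / g * u + 1 ≤ r) :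
    S + (N - a) * u ≤ r * N := by
  rcases le_total u g with hug | hgu
  · have h1 : (g - 1) * u + g ≤ g * r := by
      have := mul_le_mul_of_nonneg_left hur' hg.le
      rwa [mul_add, ← mul_assoc, mul_div_cancel₀ _ hg.ne', mul_one] at this
    nlinarith [mul_le_mul_of_nonneg_left hSa hu, mul_nonneg (sub_nonneg.2 hSN) (sub_nonneg.2 hug)]
  · nlinarith [mul_le_mul_of_nonneg_left hgu ha, mul_le_mul_of_nonneg_left hur (hS.trans hSN)]

lemma exists_le_of_forall_lam_eq {ι : Type*} {A : Finset ι} {len : ι → ℕ} {ℓ₀ : ℕ}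
    (hk : ℓ₀ ≤ k) (hA : ∀ i ∈ A, len i ≤ k ∧ lam (len i) = lam ℓ₀) :
    ∃ g, ℓ₀ ≤ g ∧ g ≤ k ∧ lam g = lam ℓ₀ ∧ ∀ i ∈ A, len i ≤ g := by
  obtain ⟨g, hgG, hgmax⟩ := (insert ℓ₀ (A.image len)).exists_max_image id (insert_nonempty _ _)
  have hg : g ≤ k ∧ lam g = lam ℓ₀ := by
    rcases mem_insert.1 hgG with rfl | hg
    · exact ⟨hk, rfl⟩
    · obtain ⟨i, hi, rfl⟩ := mem_image.1 hg
      exact hA i hi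
  exact ⟨g, hgmax ℓ₀ (mem_insert_self _ _), hg.1, hg.2,
    fun i hi => hgmax _ (mem_insert_of_mem (mem_image_of_mem len hi))⟩

lemma exists_bound_of_forall_lam_lt (hlam : IsLengthFunction k lam) {r : ℝ} (hr1 : 1 ≤ r)
    (hρ : rho k lam ≤ r) {g : ℕ} (h2g : 2 ≤ g) (hgk : g ≤ k) {ι : Type*} {B : Finset ι}
    {len : ι → ℕ} (hB : ∀ i ∈ B, 2 ≤ len i ∧ len i ≤ k ∧ lam (len i) < lam g) :
    ∃ u : ℝ, 0 ≤ u ∧ (∀ i ∈ B, (len i : ℝ) * lam (len i) ≤ lam g * u) ∧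
      u ≤ r ∧ ((g : ℝ) - 1) / g * u + 1 ≤ r := by
  have hv : 0 < lam g := (hlam.1 g h2g hgk).1
  let ratio : ι → ℝ := fun i => (len i : ℝ) * lam (len i) / lam g
  obtain ⟨u, huU, humax⟩ := (insert 0 (B.image ratio)).exists_max_image id (insert_nonempty _ _)
  refine ⟨u, humax 0 (mem_insert_self _ _), fun i hi => ?_, ?_⟩
  · have := humax _ (mem_insert_of_mem (mem_image_of_mem ratio hi))
    rwa [id, id, div_le_iff₀ hv, mul_comm u] at this
  rcases mem_insert.1 huU with rfl | hu
  · simpa using ⟨zero_le_one.trans hr1, hr1⟩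
  obtain ⟨j, hj, rfl⟩ := mem_image.1 hu
  obtain ⟨h2j, hjk, hjv⟩ := hB j hj
  have hgj : g < len j := by
    by_contra! hjg
    exact hjv.not_ge (hlam.2 _ _ h2j hjg hgk)
  have hmax := (le_rho h2g hgj hjk hjv).trans hρ
  exact ⟨(le_max_left _ _).trans hmax, (le_max_right _ _).trans hmax⟩

/-- One phase of the mechanism, counted against an exchange: `A` are cycles of the phase's
value `λ ℓ₀` and `B` cycles of smaller value, `N` agents are matched in the phase, every cycle
of `A ∪ B` uses one of them, and the cycles of `A` alone could have been matched instead. -/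
lemma phase_welfare_le (hlam : IsLengthFunction k lam) {r : ℝ} (hr1 : 1 ≤ r)
    (hρ : rho k lam ≤ r) {ι : Type*} {A B : Finset ι} {len : ι → ℕ} {ℓ₀ N : ℕ} (h2 : 2 ≤ ℓ₀)
    (hk : ℓ₀ ≤ k) (hA : ∀ i ∈ A, len i ≤ k ∧ lam (len i) = lam ℓ₀)
    (hB : ∀ i ∈ B, 2 ≤ len i ∧ len i ≤ k ∧ lam (len i) < lam ℓ₀)
    (hcard : #A + #B ≤ N) (hsum : ∑ i ∈ A, len i ≤ N) :
    ∑ i ∈ A, (len i : ℝ) * lam (len i) + ∑ i ∈ B, (len i : ℝ) * lam (len i) ≤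
      r * (lam ℓ₀ * N) := by
  -- `ρ` compares the cycles of `B` with the longest cycle of `A`, or with `ℓ₀` if there is none
  obtain ⟨g, hℓ₀g, hgk, hgv, hAg⟩ := exists_le_of_forall_lam_eq hk hA
  obtain ⟨u, hu0, hBu, hur, hur'⟩ := exists_bound_of_forall_lam_lt hlam hr1 hρ
    (h2.trans hℓ₀g) hgk (B := B) (len := len) (hgv ▸ hB)
  rw [hgv] at hBu
  set v := lam ℓ₀
  have hv : 0 < v := (hlam.1 ℓ₀ h2 hk).1
  set S : ℝ := ∑ i ∈ A, (len i : ℝ)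
  have hAsum : ∑ i ∈ A, (len i : ℝ) * lam (len i) = v * S := by
    rw [mul_sum]
    exact sum_congr rfl fun i hi => by rw [(hA i hi).2, mul_comm]
  have hBsum : ∑ i ∈ B, (len i : ℝ) * lam (len i) ≤ #B * (v * u) := by
    simpa using sum_le_card_nsmul B _ _ hBu
  have hSg : S ≤ g * #A := by
    simpa [mul_comm] using sum_le_card_nsmul A (fun i => (len i : ℝ)) g
      fun i hi => by exact_mod_cast hAg i hi
  have hSN : S ≤ N := by
    show ∑ i ∈ A, (len i : ℝ) ≤ N
    exact_mod_cast hsum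
  have hBN : (#B : ℝ) ≤ N - #A := by
    rw [le_sub_iff_add_le']
    exact_mod_cast hcard
  have key := add_sub_mul_le_mul (sum_nonneg fun i _ => Nat.cast_nonneg _) hSN hSg
    (Nat.cast_nonneg _) (Nat.cast_pos.2 (by omega)) hu0 hur hur'
  calc _ ≤ v * S + #B * (v * u) := by rw [hAsum]; linarith
    _ ≤ v * (S + (N - #A) * u) := by
      nlinarith [mul_le_mul_of_nonneg_right hBN (mul_nonneg hv.le hu0)]
    _ ≤ r * (v * N) := by nlinarith

/-- The exchanges among which a phase of value `v` chooses, on the set `F` of free agents. -/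
def IsPhaseCandidate (k : ℕ) (lam : ℕ → ℝ) (W : Fin n → Finset (Fin n)) (F : Finset (Fin n))
    (v : ℝ) (σ : Perm (Fin n)) : Prop :=
  Feasible k W σ ∧ σ.support ⊆ F ∧ ∀ x ∈ σ.support, lam (cycLen σ x) = v

section PhaseCandidate

variable {W : Fin n → Finset (Fin n)} {F : Finset (Fin n)} {v : ℝ} {σ τ : Perm (Fin n)}

lemma isPhaseCandidate_one : IsPhaseCandidate k lam W F v 1 :=
  ⟨fun _ hx => absurd rfl hx, by simp, by simp⟩

lemma IsPhaseCandidate.mul (hσ : IsPhaseCandidate k lam W F v σ)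
    (hτ : IsPhaseCandidate k lam W F v τ) (h : σ.Disjoint τ) :
    IsPhaseCandidate k lam W F v (σ * τ) := by
  refine ⟨hσ.1.mul hτ.1 h, h.support_mul ▸ union_subset hσ.2.1 hτ.2.1, fun x hx => ?_⟩
  rw [h.support_mul, mem_union] at hx
  rcases hx with hx | hx
  · rw [cycLen_mul_of_apply_eq h ((h x).resolve_left (mem_support.1 hx))]
    exact hσ.2.2 x hx
  · rw [h.commute.eq, cycLen_mul_of_apply_eq h.symm ((h x).resolve_right (mem_support.1 hx))]
    exact hτ.2.2 x hx

lemma IsPhaseCandidate.mono {W' : Fin n → Finset (Fin n)} (hσ : IsPhaseCandidate k lam W F v σ)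
    (hW : ∀ x, W x ⊆ W' x) : IsPhaseCandidate k lam W' F v σ :=
  ⟨fun x hx => ⟨hW x (hσ.1 x hx).1, (hσ.1 x hx).2⟩, hσ.2⟩

lemma IsPhaseCandidate.utility_eq (hσ : IsPhaseCandidate k lam W F v σ) {x : Fin n}
    (hx : σ x ≠ x) : utility lam σ x = v := by
  rw [utility, if_pos hx, hσ.2.2 x (mem_support.2 hx)]

lemma IsPhaseCandidate.SW_eq (hσ : IsPhaseCandidate k lam W F v σ) :
    SW lam σ = v * #σ.support := by
  rw [SW_eq_sum_support, sum_congr rfl hσ.2.2, sum_const, nsmul_eq_mul, mul_comm]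

lemma isPhaseCandidate_of_mem_cycleFactorsFinset {π c : Perm (Fin n)} (hπ : Feasible k W π)
    (hc : c ∈ π.cycleFactorsFinset) (hF : c.support ⊆ F) (hv : lam #c.support = v) :
    IsPhaseCandidate k lam W F v c :=
  ⟨hπ.of_mem_cycleFactorsFinset hc, hF, fun x hx => by
    rw [cycLen_of_isCycle (mem_cycleFactorsFinset_iff.1 hc).1 (mem_support.1 hx), hv]⟩

end PhaseCandidate

/-- Phases prefer exchanges matching more agents. The remaining ties are broken by an order
that does not depend on the wish lists, which is what makes the mechanism truthful. -/
def priority (σ : Perm (Fin n)) : ℕ ×ₗ ℕ :=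
  toLex (#σ.support, Fintype.equivFin _ σ)

lemma priority_injective : Function.Injective (priority (n := n)) := fun _ _ h =>
  (Fintype.equivFin _).injective (Fin.val_injective (congrArg (fun p => (ofLex p).2) h))

open Classical in
def phaseCandidates (k : ℕ) (lam : ℕ → ℝ) (W : Fin n → Finset (Fin n)) (F : Finset (Fin n))
    (v : ℝ) : Finset (Perm (Fin n)) :=
  {σ | IsPhaseCandidate k lam W F v σ}

lemma mem_phaseCandidates {W : Fin n → Finset (Fin n)} {F : Finset (Fin n)} {v : ℝ}
    {σ : Perm (Fin n)} : σ ∈ phaseCandidates k lam W F v ↔ IsPhaseCandidate k lam W F v σ := by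
  simp [phaseCandidates]

def phaseChoice (k : ℕ) (lam : ℕ → ℝ) (W : Fin n → Finset (Fin n)) (F : Finset (Fin n))
    (v : ℝ) : Perm (Fin n) :=
  ((phaseCandidates k lam W F v).exists_max_image priority
    ⟨1, mem_phaseCandidates.2 isPhaseCandidate_one⟩).choose

section PhaseChoice

variable {W : Fin n → Finset (Fin n)} {F : Finset (Fin n)} {v : ℝ} {τ : Perm (Fin n)}

lemma phaseChoice_spec : phaseChoice k lam W F v ∈ phaseCandidates k lam W F v ∧
    ∀ τ ∈ phaseCandidates k lam W F v, priority τ ≤ priority (phaseChoice k lam W F v) :=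
  ((phaseCandidates k lam W F v).exists_max_image priority
    ⟨1, mem_phaseCandidates.2 isPhaseCandidate_one⟩).choose_spec

lemma isPhaseCandidate_phaseChoice : IsPhaseCandidate k lam W F v (phaseChoice k lam W F v) :=
  mem_phaseCandidates.1 phaseChoice_spec.1

lemma priority_le_phaseChoice (hτ : IsPhaseCandidate k lam W F v τ) :
    priority τ ≤ priority (phaseChoice k lam W F v) :=
  phaseChoice_spec.2 τ (mem_phaseCandidates.2 hτ)

lemma card_support_le_phaseChoice (hτ : IsPhaseCandidate k lam W F v τ) :
    #τ.support ≤ #(phaseChoice k lam W F v).support :=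
  Prod.Lex.monotone_fst _ _ (priority_le_phaseChoice hτ)

lemma phaseChoice_eq_of_subset {W' : Fin n → Finset (Fin n)} (hW : ∀ x, W x ⊆ W' x)
    (h : IsPhaseCandidate k lam W F v (phaseChoice k lam W' F v)) :
    phaseChoice k lam W' F v = phaseChoice k lam W F v :=
  priority_injective <| le_antisymm (priority_le_phaseChoice h)
    (priority_le_phaseChoice (isPhaseCandidate_phaseChoice.mono hW))

lemma not_disjoint_phaseChoice (hτ : IsPhaseCandidate k lam W F v τ) (hτ1 : τ ≠ 1) :
    ¬ _root_.Disjoint τ.support (phaseChoice k lam W F v).support := by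
  intro hd
  have hmul := isPhaseCandidate_phaseChoice.mul hτ (disjoint_iff_disjoint_support.2 hd.symm)
  have := card_support_le_phaseChoice hmul
  rw [(disjoint_iff_disjoint_support.2 hd.symm).card_support_mul] at this
  exact hτ1 (card_support_eq_zero.1 (by omega))

end PhaseChoice

def runPhases (k : ℕ) (lam : ℕ → ℝ) (W : Fin n → Finset (Fin n)) :
    List ℝ → Finset (Fin n) → Perm (Fin n)
  | [], _ => 1
  | v :: vs, F =>
    phaseChoice k lam W F v * runPhases k lam W vs (F \ (phaseChoice k lam W F v).support)

def mechanism (k : ℕ) (lam : ℕ → ℝ) : Mechanism := fun _ W =>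
  runPhases k lam W (((Icc 2 k).image lam).sort (· ≥ ·)) univ

section RunPhases

variable {W : Fin n → Finset (Fin n)}

lemma support_runPhases_subset (vs : List ℝ) (F : Finset (Fin n)) :
    (runPhases k lam W vs F).support ⊆ F := by
  induction vs generalizing F with
  | nil => simp [runPhases]
  | cons v vs ih =>
    refine (support_mul_le _ _).trans (union_subset isPhaseCandidate_phaseChoice.2.1 ?_)
    exact (ih _).trans sdiff_subset

lemma disjoint_phaseChoice_runPhases (v : ℝ) (vs : List ℝ) (F : Finset (Fin n)) :
    (phaseChoice k lam W F v).Disjoint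
      (runPhases k lam W vs (F \ (phaseChoice k lam W F v).support)) :=
  disjoint_iff_disjoint_support.2 <|
    (disjoint_sdiff.mono_right (support_runPhases_subset vs _))

lemma feasible_runPhases (vs : List ℝ) (F : Finset (Fin n)) :
    Feasible k W (runPhases k lam W vs F) := by
  induction vs generalizing F with
  | nil => exact fun _ hx => absurd rfl hx
  | cons v vs ih =>
    exact isPhaseCandidate_phaseChoice.1.mul (ih _) (disjoint_phaseChoice_runPhases v vs F)

lemma SW_runPhases_cons (v : ℝ) (vs : List ℝ) (F : Finset (Fin n)) :
    SW lam (runPhases k lam W (v :: vs) F) = v * #(phaseChoice k lam W F v).support +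
      SW lam (runPhases k lam W vs (F \ (phaseChoice k lam W F v).support)) := by
  rw [runPhases, SW_mul (disjoint_phaseChoice_runPhases v vs F),
    isPhaseCandidate_phaseChoice.SW_eq]

lemma utility_runPhases_cons (v : ℝ) (vs : List ℝ) (F : Finset (Fin n)) (i : Fin n) :
    utility lam (runPhases k lam W (v :: vs) F) i = utility lam (phaseChoice k lam W F v) i +
      utility lam (runPhases k lam W vs (F \ (phaseChoice k lam W F v).support)) i :=
  utility_mul (disjoint_phaseChoice_runPhases v vs F) i

lemma utility_runPhases_le {v : ℝ} (hv : 0 ≤ v) (vs : List ℝ) (hvs : ∀ u ∈ vs, u ≤ v)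
    (F : Finset (Fin n)) (i : Fin n) : utility lam (runPhases k lam W vs F) i ≤ v := by
  induction vs generalizing F with
  | nil => simp [runPhases, utility, hv]
  | cons u vs ih =>
    rw [utility_runPhases_cons]
    rcases disjoint_phaseChoice_runPhases (k := k) (lam := lam) (W := W) u vs F i with h | h
    · rw [utility_of_apply_eq h, zero_add]
      exact ih (fun w hw => hvs w (List.mem_cons_of_mem u hw)) _
    · rw [utility_of_apply_eq h, add_zero]
      by_cases hi : phaseChoice k lam W F u i = i
      · rw [utility_of_apply_eq hi]
        exact hv
      · rw [isPhaseCandidate_phaseChoice.utility_eq hi]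
        exact hvs u List.mem_cons_self

end RunPhases

lemma utility_runPhases_le_of_subset {W W' : Fin n → Finset (Fin n)} {i : Fin n}
    (hW : ∀ x, W x ⊆ W' x) (hWi : ∀ x ≠ i, W' x = W x) (vs : List ℝ)
    (hvs : vs.Pairwise (· ≥ ·)) (hpos : ∀ v ∈ vs, 0 ≤ v) (F : Finset (Fin n)) :
    utility lam (runPhases k lam W vs F) i ≤ utility lam (runPhases k lam W' vs F) i := by
  induction vs generalizing F with
  | nil => exact le_rfl
  | cons v vs ih =>
    have hvs' := List.pairwise_cons.1 hvs
    set σ' := phaseChoice k lam W' F v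
    by_cases hσ' : IsPhaseCandidate k lam W F v σ'
    · rw [utility_runPhases_cons, utility_runPhases_cons, phaseChoice_eq_of_subset hW hσ']
      exact add_le_add_right (ih hvs'.2 (fun u hu => hpos u (List.mem_cons_of_mem v hu)) _) _
    -- otherwise `σ'` uses the enlarged wish list, so it serves `i` at the largest value `v`
    have hσ'i : σ' i ≠ i := fun hσ'i => hσ' ⟨fun x hx => by
      rw [← hWi x (fun h => hx (h ▸ hσ'i))]
      exact isPhaseCandidate_phaseChoice.1 x hx, isPhaseCandidate_phaseChoice.2⟩
    calc utility lam (runPhases k lam W (v :: vs) F) i ≤ v :=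
          utility_runPhases_le (hpos v List.mem_cons_self) _
            (fun u hu => (List.mem_cons.1 hu).elim le_of_eq (hvs'.1 u)) F i
      _ = utility lam (runPhases k lam W' (v :: vs) F) i := by
        rw [utility_runPhases_cons, isPhaseCandidate_phaseChoice.utility_eq hσ'i,
          utility_of_apply_eq (((disjoint_phaseChoice_runPhases v vs F) i).resolve_left hσ'i),
          add_zero]

lemma isMechanism_mechanism (k : ℕ) (lam : ℕ → ℝ) : IsMechanism k (mechanism k lam) :=
  fun _ _ _ => feasible_runPhases _ _

lemma truthful_mechanism (hlam : IsLengthFunction k lam) : Truthful k lam (mechanism k lam) := by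
  intro n Wstar W _ hsub i
  refine utility_runPhases_le_of_subset (fun x => ?_) (fun x hx => Function.update_of_ne hx _ _)
    _ (pairwise_sort _ _) (fun v hv => ?_) univ
  · rcases eq_or_ne x i with rfl | hx
    · rw [Function.update_self]
      exact hsub x
    · rw [Function.update_of_ne hx]
  · obtain ⟨ℓ, hℓ, rfl⟩ := mem_image.1 ((mem_sort _).1 hv)
    exact (hlam.1 ℓ (mem_Icc.1 hℓ).1 (mem_Icc.1 hℓ).2).1.le

section Approximation

variable {W : Fin n → Finset (Fin n)} {π : Perm (Fin n)}

lemma card_le_card_of_forall_not_disjoint {S : Finset (Perm (Fin n))}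
    (hS : S ⊆ π.cycleFactorsFinset) {s : Finset (Fin n)}
    (h : ∀ c ∈ S, ¬ _root_.Disjoint c.support s) : #S ≤ #s := by
  have hdisj : (S : Set (Perm (Fin n))).PairwiseDisjoint (fun c => c.support ∩ s) :=
    fun c hc d hd hne => (disjoint_iff_disjoint_support.1
      (cycleFactorsFinset_pairwise_disjoint π (hS hc) (hS hd) hne)).mono
        inter_subset_left inter_subset_left
  exact (card_le_card_biUnion hdisj fun c hc => not_disjoint_iff_nonempty_inter.1 (h c hc)).trans
    (card_le_card (biUnion_subset.2 fun _ _ => inter_subset_right))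

lemma exists_isPhaseCandidate_card_support_eq_sum (hπ : Feasible k W π) {F : Finset (Fin n)}
    {v : ℝ} {A : Finset (Perm (Fin n))} (hA : A ⊆ π.cycleFactorsFinset)
    (hAF : ∀ c ∈ A, c.support ⊆ F ∧ lam #c.support = v) :
    ∃ τ, IsPhaseCandidate k lam W F v τ ∧ τ.support ⊆ A.biUnion support ∧
      #τ.support = ∑ c ∈ A, #c.support := by
  induction A using Finset.induction_on with
  | empty => exact ⟨1, isPhaseCandidate_one, by simp, by simp⟩
  | insert c A hcA ih =>
    obtain ⟨τ, hτ, hτA, hτcard⟩ := ih ((subset_insert c A).trans hA)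
      fun d hd => hAF d (mem_insert_of_mem hd)
    have hc := hA (mem_insert_self c A)
    have hd : τ.Disjoint c := disjoint_iff_disjoint_support.2 <|
      disjoint_of_subset_left hτA <| (disjoint_biUnion_left _ _ _).2 fun d hdA =>
        disjoint_iff_disjoint_support.1 <| cycleFactorsFinset_pairwise_disjoint π
          (hA (mem_insert_of_mem hdA)) hc (ne_of_mem_of_not_mem hdA hcA)
    have hcF := hAF c (mem_insert_self c A)
    refine ⟨τ * c, hτ.mul (isPhaseCandidate_of_mem_cycleFactorsFinset hπ hc hcF.1 hcF.2) hd,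
      ?_, ?_⟩
    · rw [hd.support_mul, biUnion_insert, union_comm]
      exact union_subset_union subset_rfl hτA
    · rw [hd.card_support_mul, sum_insert hcA, hτcard, add_comm]

lemma cyclesWelfare_filter_le_phase (hlam : IsLengthFunction k lam) {r : ℝ} (hr1 : 1 ≤ r)
    (hρ : rho k lam ≤ r) (hπ : Feasible k W π) {ℓ₀ : ℕ} (h2 : 2 ≤ ℓ₀) (hk : ℓ₀ ≤ k)
    {F : Finset (Fin n)} {D : Finset (Perm (Fin n))} (hD : D ⊆ π.cycleFactorsFinset)
    (hDF : ∀ c ∈ D, c.support ⊆ F) (hle : ∀ c ∈ D, lam #c.support ≤ lam ℓ₀) :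
    cyclesWelfare lam {c ∈ D | lam #c.support = lam ℓ₀ ∨
        ¬ _root_.Disjoint c.support (phaseChoice k lam W F (lam ℓ₀)).support} ≤
      r * (lam ℓ₀ * #(phaseChoice k lam W F (lam ℓ₀)).support) := by
  set σ := phaseChoice k lam W F (lam ℓ₀)
  set D' := {c ∈ D | lam #c.support = lam ℓ₀ ∨ ¬ _root_.Disjoint c.support σ.support}
  have hD' : D' ⊆ π.cycleFactorsFinset := (filter_subset _ D).trans hD
  have hmeet : ∀ c ∈ D', ¬ _root_.Disjoint c.support σ.support := by
    intro c hc
    obtain ⟨hcD, hcv | hcσ⟩ := mem_filter.1 hc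
    · exact not_disjoint_phaseChoice
        (isPhaseCandidate_of_mem_cycleFactorsFinset hπ (hD hcD) (hDF c hcD) hcv)
        (mem_cycleFactorsFinset_iff.1 (hD hcD)).1.ne_one
    · exact hcσ
  have hcard := card_le_card_of_forall_not_disjoint hD' hmeet
  rw [← card_filter_add_card_filter_not (fun c => lam #c.support = lam ℓ₀)] at hcard
  obtain ⟨τ, hτ, -, hτcard⟩ := exists_isPhaseCandidate_card_support_eq_sum hπ
    ((filter_subset _ D').trans hD') fun c hc => ⟨hDF c (mem_filter.1 (mem_filter.1 hc).1).1,
      (mem_filter.1 hc).2⟩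
  rw [cyclesWelfare, ← sum_filter_add_sum_filter_not D' fun c => lam #c.support = lam ℓ₀]
  refine phase_welfare_le hlam hr1 hρ h2 hk (fun c hc => ⟨?_, (mem_filter.1 hc).2⟩)
    (fun c hc => ⟨?_, ?_, ?_⟩) hcard (hτcard ▸ card_support_le_phaseChoice hτ)
  · exact card_support_le_of_mem_cycleFactorsFinset hπ (hD' (mem_filter.1 hc).1)
  · exact (mem_cycleFactorsFinset_iff.1 (hD' (mem_filter.1 hc).1)).1.two_le_card_support
  · exact card_support_le_of_mem_cycleFactorsFinset hπ (hD' (mem_filter.1 hc).1)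
  · exact (hle c (mem_filter.1 (mem_filter.1 hc).1).1).lt_of_ne (mem_filter.1 hc).2

lemma cyclesWelfare_le_mul_SW_runPhases (hlam : IsLengthFunction k lam) {r : ℝ} (hr1 : 1 ≤ r)
    (hρ : rho k lam ≤ r) (hπ : Feasible k W π)
    (vs : List ℝ) (hvs : vs.Pairwise (· ≥ ·)) (hvals : ∀ v ∈ vs, v ∈ (Icc 2 k).image lam)
    (F : Finset (Fin n)) (D : Finset (Perm (Fin n))) (hD : D ⊆ π.cycleFactorsFinset)
    (hDF : ∀ c ∈ D, c.support ⊆ F ∧ lam #c.support ∈ vs) :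
    cyclesWelfare lam D ≤ r * SW lam (runPhases k lam W vs F) := by
  induction vs generalizing F D with
  | nil =>
    rw [eq_empty_of_forall_notMem fun c hc => List.not_mem_nil (hDF c hc).2]
    simp [cyclesWelfare, runPhases, SW, utility]
  | cons v vs ih =>
    obtain ⟨ℓ₀, hℓ₀, rfl⟩ := mem_image.1 (hvals _ List.mem_cons_self)
    have hvs' := List.pairwise_cons.1 hvs
    set σ := phaseChoice k lam W F (lam ℓ₀)
    have hle : ∀ c ∈ D, lam #c.support ≤ lam ℓ₀ := fun c hc =>
      (List.mem_cons.1 (hDF c hc).2).elim le_of_eq (hvs'.1 _)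
    have hphase := cyclesWelfare_filter_le_phase hlam hr1 hρ hπ (mem_Icc.1 hℓ₀).1
      (mem_Icc.1 hℓ₀).2 hD (fun c hc => (hDF c hc).1) hle
    have hrest := ih hvs'.2 (fun v hv => hvals v (List.mem_cons_of_mem _ hv)) (F \ σ.support)
      {c ∈ D | ¬(lam #c.support = lam ℓ₀ ∨ ¬ _root_.Disjoint c.support σ.support)}
      ((filter_subset _ D).trans hD) fun c hc => by
        obtain ⟨hcD, hcv, hcσ⟩ : c ∈ D ∧ lam #c.support ≠ lam ℓ₀ ∧
            _root_.Disjoint c.support σ.support := by simpa using hc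
        exact ⟨subset_sdiff.2 ⟨(hDF c hcD).1, hcσ⟩,
          (List.mem_cons.1 (hDF c hcD).2).resolve_left hcv⟩
    rw [SW_runPhases_cons, mul_add, cyclesWelfare, ← sum_filter_add_sum_filter_not D
      fun c => lam #c.support = lam ℓ₀ ∨ ¬ _root_.Disjoint c.support σ.support]
    exact add_le_add hphase hrest

end Approximation

lemma approxRatio_mechanism (hlam : IsLengthFunction k lam) {r : ℝ} (hr1 : 1 ≤ r)
    (hρ : rho k lam ≤ r) : ApproxRatio k lam (mechanism k lam) r := by
  refine ⟨hr1, fun n W _ π hπ => ?_⟩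
  have h : SW lam π ≤ r * SW lam (mechanism k lam n W) := by
    rw [SW_eq_cyclesWelfare]
    refine cyclesWelfare_le_mul_SW_runPhases hlam hr1 hρ hπ _ (pairwise_sort _ _)
      (fun v hv => (mem_sort _).1 hv) univ π.cycleFactorsFinset subset_rfl fun c hc =>
        ⟨subset_univ _, (mem_sort _).2 <| mem_image_of_mem lam <| mem_Icc.2
          ⟨(mem_cycleFactorsFinset_iff.1 hc).1.two_le_card_support,
            card_support_le_of_mem_cycleFactorsFinset hπ hc⟩⟩
  rw [ge_iff_le, one_div_mul_eq_div, div_le_iff₀ (by linarith)]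
  linarith [h]

theorem exists_truthful_mechanism_nonuniform_approx_general
    (k : ℕ) (lam : ℕ → ℝ) (hlam : IsLengthFunction k lam)
    (hnu : NonUniform k lam) (ε : ℝ) :
    ∃ f : Mechanism,
      IsMechanism k f ∧ Truthful k lam f ∧
        ApproxRatio k lam f (max ((k : ℝ) - 1 + ε) (rho k lam)) :=
  ⟨mechanism k lam, isMechanism_mechanism k lam, truthful_mechanism hlam,
    approxRatio_mechanism hlam ((one_le_rho hlam hnu).trans (le_max_right _ _))
      (le_max_right _ _)⟩

/-- Theorem 4 of the paper.  For every length bound `k ≥ 3`, every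
non-uniform length function `λ`, and every `ε > 0`, there exists a truthful `(k,λ)`-BE
mechanism with approximation ratio `max{ k − 1 + ε, ρ(λ) }`. -/
theorem exists_truthful_mechanism_nonuniform_approx
    (k : ℕ) (hk : 3 ≤ k) (lam : ℕ → ℝ) (hlam : IsLengthFunction k lam)
    (hnu : NonUniform k lam) (ε : ℝ) (hε : 0 < ε) :
    ∃ f : Mechanism,
      IsMechanism k f ∧ Truthful k lam f ∧
        ApproxRatio k lam f (max ((k : ℝ) - 1 + ε) (rho k lam)) :=
  exists_truthful_mechanism_nonuniform_approx_general k lam hlam hnu ε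

end

end BarterExchange
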